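/- arXiv:2101.08083 — 4 statements merged into one kernel-verified Lean document; each statement's English description precedes it below -/
import Mathlib

section
/- For any cost function val : 𝒫({1,…,d}) → ℝ, the Shapley values φ_j(val) = (1/d) Σ_{A ⊆ {1,…,d}∖{j}} C(d−1,|A|)⁻¹ (val(A∪{j}) − val(A)) satisfy the efficiency property: Σ_{j=1}^{d} φ_j(val) = val({1,…,d}) − val(∅). -/
/-!
Regroup the marginal contributions `val (A ∪ {j}) - val A` by the coalition `B` whose value
they involve: `val B` gains `|B| / C(d-1, |B|-1)` from the players in `B` and loses
`(d - |B|) / C(d-1, |B|)` from the players outside it. Both weights equal `d / C(d, |B|)`, so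
they cancel except for `B = ∅` (no gain) and `B = univ` (no loss), leaving
`d * (val univ - val ∅)`.
-/

open Finset

section MarginalContributions

variable {α : Type*} [Fintype α] [DecidableEq α]

theorem sum_powerset_erase_mul_sub (c : ℕ → ℝ) (f : Finset α → ℝ) (j : α) :
    ∑ A ∈ (univ.erase j).powerset, c #A * (f (insert j A) - f A)
      = ∑ B, if j ∈ B then c (#B - 1) * f B else -(c #B * f B) := by
  have split := sum_powerset_insert (notMem_erase j univ)
    fun B => if j ∈ B then c (#B - 1) * f B else -(c #B * f B)
  rw [insert_erase (mem_univ j), powerset_univ] at split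
  rw [split, ← sum_add_distrib]
  refine sum_congr rfl fun A hA => ?_
  have hjA : j ∉ A := fun h => notMem_erase j univ (mem_powerset.mp hA h)
  simp only [hjA, ↓reduceIte, mem_insert, or_false, card_insert_of_notMem hjA,
    add_tsub_cancel_right]
  ring

theorem sum_sum_powerset_erase_mul_sub (c : ℕ → ℝ) (f : Finset α → ℝ) :
    ∑ j, ∑ A ∈ (univ.erase j).powerset, c #A * (f (insert j A) - f A)
      = ∑ B, (#B * c (#B - 1) - #Bᶜ * c #B) * f B := by
  simp_rw [sum_powerset_erase_mul_sub]
  rw [sum_comm]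
  refine sum_congr rfl fun B _ => ?_
  rw [sum_ite, filter_mem_eq_inter, univ_inter, filter_notMem_eq_sdiff, ← compl_eq_univ_sdiff,
    sum_const, sum_const, nsmul_eq_mul, nsmul_eq_mul]
  ring

end MarginalContributions

theorem mul_inv_choose_pred_eq {n k : ℕ} (hk : 0 < k) (hkn : k < n) :
    (k : ℝ) * ((n - 1).choose (k - 1) : ℝ)⁻¹ = ((n : ℝ) - k) * ((n - 1).choose k : ℝ)⁻¹ := by
  obtain ⟨m, rfl⟩ : ∃ m, k = m + 1 := ⟨k - 1, by omega⟩
  have hpos : ∀ i ≤ n - 1, (0 : ℝ) < (n - 1).choose i := fun i hi => by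
    exact_mod_cast Nat.choose_pos hi
  have hsub : ((n : ℝ) - (m + 1 : ℕ)) = ((n - 1 - m : ℕ) : ℝ) := by
    rw [Nat.cast_sub (by omega), Nat.cast_sub (by omega)]; push_cast; ring
  rw [hsub, Nat.add_sub_cancel]
  have hpm := hpos m (by omega)
  have hpm1 := hpos (m + 1) (by omega)
  field_simp
  exact_mod_cast (mul_comm _ _).trans (Nat.choose_succ_right_eq (n - 1) m)

theorem card_mul_inv_choose_sub_eq {α : Type*} [Fintype α] [DecidableEq α] [Nonempty α] {n : ℕ}
    (hn : Fintype.card α = n) (B : Finset α) :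
    (#B : ℝ) * ((n - 1).choose (#B - 1) : ℝ)⁻¹ - #Bᶜ * ((n - 1).choose #B : ℝ)⁻¹
      = (if B = univ then (n : ℝ) else 0) - if B = ∅ then (n : ℝ) else 0 := by
  subst hn
  have hne : (univ : Finset α) ≠ ∅ := univ_nonempty.ne_empty
  rcases eq_or_ne B univ with rfl | hBu
  · simp [hne]
  rcases eq_or_ne B ∅ with rfl | hBe
  · simp [hne.symm]
  have hpos : 0 < #B := card_pos.mpr (nonempty_iff_ne_empty.mpr hBe)
  have hlt : #B < Fintype.card α := (card_lt_iff_ne_univ B).mpr hBu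
  rw [if_neg hBu, if_neg hBe, card_compl, Nat.cast_sub hlt.le, mul_inv_choose_pred_eq hpos hlt]
  ring

/-- Efficiency property of the Shapley values: for any cost function `val` on subsets of
`{1,…,d}`, the Shapley values sum to `val {1,…,d} − val ∅`. -/
theorem shapley_efficiency {d : ℕ} (val : Finset (Fin d) → ℝ) :
    ∑ j : Fin d, (1 / (d : ℝ)) *
      ∑ A ∈ (Finset.univ.erase j).powerset,
        (((d - 1).choose A.card : ℝ))⁻¹ * (val (insert j A) - val A)
      = val Finset.univ - val ∅ := by
  rcases Nat.eq_zero_or_pos d with rfl | hd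
  · simp
  have : Nonempty (Fin d) := ⟨⟨0, hd⟩⟩
  rw [← mul_sum, sum_sum_powerset_erase_mul_sub (fun k => ((d - 1).choose k : ℝ)⁻¹) val]
  simp_rw [card_mul_inv_choose_sub_eq (Fintype.card_fin d), sub_mul, ite_mul, zero_mul,
    sum_sub_distrib, Fintype.sum_ite_eq']
  field_simp
end

section
/- Let (Ω,𝔉,ℙ) be a probability space, X₁,…,X_d real-valued random variables, and Z a real-valued random variable with E[Z²] < ∞ and Var(Z) > 0 (in the paper, Z = 1_{F_t}(X) is the indicator of a failure event). For A ⊆ {1,…,d}, let σ(X_A) be the σ-algebra generated by (X_i)_{i∈A} and define the cost function val(A) = Var(E[Z | σ(X_A)])/Var(Z) (with val(∅) = 0). Then for every j ∈ {1,…,d}, the (ℓ²)-target Shapley effect T-Sh_j = (1/d) Σ_{A ⊆ {1,…,d}∖{j}} C(d−1,|A|)⁻¹ (val(A∪{j}) − val(A)) is nonnegative. -/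
/-!
Conditioning is an L² contraction: by the law of total variance,
`Var(E[Z | 𝒢]) = Var(Z) - E[Var(Z | 𝒢)] ≤ Var(Z)`. Applied to `E[Z | 𝒢₂]` and combined with the
tower property `E[E[Z | 𝒢₂] | 𝒢₁] = E[Z | 𝒢₁]`, this makes `𝒢 ↦ Var(E[Z | 𝒢])` monotone. Since
`σ(X_A) ≤ σ(X_{A ∪ {j}})`, every marginal contribution in the Shapley sum is nonnegative, and so
are its weights.
-/

open MeasureTheory ProbabilityTheory Finset

namespace ProbabilityTheory

variable {Ω : Type*} {m m₀ : MeasurableSpace Ω} {μ : Measure Ω} {X : Ω → ℝ}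

lemma integral_condVar_nonneg : 0 ≤ μ[Var[X; μ | m]] :=
  integral_nonneg_of_ae <| condExp_nonneg <| .of_forall fun _ => sq_nonneg _

lemma variance_condExp_le [IsProbabilityMeasure μ] (hm : m ≤ m₀) (hX : MemLp X 2 μ) :
    Var[μ[X | m]; μ] ≤ Var[X; μ] := by
  rw [← integral_condVar_add_variance_condExp hm hX]
  exact le_add_of_nonneg_left integral_condVar_nonneg

lemma variance_condExp_mono [IsProbabilityMeasure μ] {m₁ m₂ : MeasurableSpace Ω} (h₁₂ : m₁ ≤ m₂)
    (hm₂ : m₂ ≤ m₀) (hX : MemLp X 2 μ) : Var[μ[X | m₁]; μ] ≤ Var[μ[X | m₂]; μ] := by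
  rw [← variance_congr (condExp_condExp_of_le h₁₂ hm₂)]
  exact variance_condExp_le (h₁₂.trans hm₂) (hX.condExp one_le_two)

end ProbabilityTheory

theorem l2_target_shapley_effect_nonneg_general {Ω : Type*} {𝔉 : MeasurableSpace Ω} {μ : Measure Ω}
    [IsProbabilityMeasure μ] {d : ℕ} (X : Fin d → Ω → ℝ) (hX : ∀ i, Measurable (X i))
    (Z : Ω → ℝ) (hZ : MemLp Z 2 μ) (j : Fin d) :
    0 ≤ (1 / (d : ℝ)) *
      ∑ A ∈ (Finset.univ.erase j).powerset,
        (((d - 1).choose A.card : ℝ))⁻¹ *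
          ((variance (μ[Z| ⨆ i ∈ insert j A, MeasurableSpace.comap (X i) inferInstance]) μ
              / variance Z μ)
            - (variance (μ[Z| ⨆ i ∈ A, MeasurableSpace.comap (X i) inferInstance]) μ
              / variance Z μ)) := by
  refine mul_nonneg (by positivity) (sum_nonneg fun A _ => mul_nonneg (by positivity) ?_)
  have hσ_le : ⨆ i ∈ insert j A, MeasurableSpace.comap (X i) inferInstance ≤ 𝔉 :=
    iSup₂_le fun i _ => (hX i).comap_le
  have hσ_mono : ⨆ i ∈ A, MeasurableSpace.comap (X i) inferInstance
      ≤ ⨆ i ∈ insert j A, MeasurableSpace.comap (X i) inferInstance :=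
    biSup_mono fun _ => mem_insert_of_mem
  exact sub_nonneg.2 <| div_le_div_of_nonneg_right (variance_condExp_mono hσ_mono hσ_le hZ)
    (variance_nonneg Z μ)

/-- Nonnegativity of the (ℓ²)-target Shapley effects: with cost function
`val A = Var(E[Z | σ(X_A)]) / Var(Z)` (where `σ(X_∅) = ⊥` so that `val ∅ = 0`), the Shapley
value of every player `j` is nonnegative. No independence assumption on the inputs is made. -/
theorem l2_target_shapley_effect_nonneg {Ω : Type*} {𝔉 : MeasurableSpace Ω} {μ : Measure Ω}
    [IsProbabilityMeasure μ] {d : ℕ} (X : Fin d → Ω → ℝ) (hX : ∀ i, Measurable (X i))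
    (Z : Ω → ℝ) (hZ : MemLp Z 2 μ) (hvar : 0 < variance Z μ) (j : Fin d) :
    0 ≤ (1 / (d : ℝ)) *
      ∑ A ∈ (Finset.univ.erase j).powerset,
        (((d - 1).choose A.card : ℝ))⁻¹ *
          ((variance (μ[Z| ⨆ i ∈ insert j A, MeasurableSpace.comap (X i) inferInstance]) μ
              / variance Z μ)
            - (variance (μ[Z| ⨆ i ∈ A, MeasurableSpace.comap (X i) inferInstance]) μ
              / variance Z μ)) :=
  l2_target_shapley_effect_nonneg_general (𝔉 := 𝔉) X hX Z hZ j
end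

section
/- Let (Ω,𝔉,ℙ) be a probability space, X₁,…,X_d real-valued random variables, and Z a real-valued integrable random variable with E[|Z − E[Z]|] > 0 (in the paper, Z = 1_{F_t}(X) is the indicator of a failure event). For A ⊆ {1,…,d}, let σ(X_A) be the σ-algebra generated by (X_i)_{i∈A} and define the cost function val(A) = E[|E[Z | σ(X_A)] − E[Z]|] / E[|Z − E[Z]|] (with val(∅) = 0). Then for every j ∈ {1,…,d}, the (ℓ¹)-target Shapley effect T-Sh_j^{ℓ¹} = (1/d) Σ_{A ⊆ {1,…,d}∖{j}} C(d−1,|A|)⁻¹ (val(A∪{j}) − val(A)) is nonnegative. -/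
/-!
Adding inputs refines the σ-algebra `σ(X_A) ⊆ σ(X_{A ∪ {j}})`, and by the tower property
`E[Z | X_A] − E[Z]` is the conditional expectation of `E[Z | X_{A ∪ {j}}] − E[Z]` given `X_A`.
Conditional expectation is an `L¹` contraction, so the cost function is monotone; every marginal
contribution in the Shapley sum is then nonnegative.
-/

open MeasureTheory ProbabilityTheory Finset

section CondExp

variable {Ω : Type*} {mΩ : MeasurableSpace Ω} {μ : Measure Ω} [IsFiniteMeasure μ]
  {Z : Ω → ℝ} {m₁ m₂ : MeasurableSpace Ω}

lemma condExp_sub_const_ae (hZ : Integrable Z μ) (hm : m₁ ≤ mΩ) (c : ℝ) :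
    μ[fun ω => Z ω - c|m₁] =ᵐ[μ] fun ω => μ[Z|m₁] ω - c := by
  filter_upwards [condExp_sub hZ (integrable_const c) m₁] with ω hω
  rw [show (fun ω => Z ω - c) = Z - fun _ => c from rfl, hω, condExp_const hm c, Pi.sub_apply]

lemma integral_abs_condExp_sub_const_mono (hZ : Integrable Z μ) (h₁₂ : m₁ ≤ m₂) (hm₂ : m₂ ≤ mΩ)
    (c : ℝ) : ∫ ω, |μ[Z|m₁] ω - c| ∂μ ≤ ∫ ω, |μ[Z|m₂] ω - c| ∂μ := by
  have hZc : Integrable (fun ω => Z ω - c) μ := hZ.sub (integrable_const c)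
  have htower : μ[μ[fun ω => Z ω - c|m₂]|m₁] =ᵐ[μ] μ[fun ω => Z ω - c|m₁] :=
    condExp_condExp_of_le h₁₂ hm₂
  calc ∫ ω, |μ[Z|m₁] ω - c| ∂μ
      = ∫ ω, |μ[μ[fun ω => Z ω - c|m₂]|m₁] ω| ∂μ := by
        refine integral_congr_ae ?_
        filter_upwards [condExp_sub_const_ae hZ (h₁₂.trans hm₂) c, htower] with ω h₁ h₂
        rw [h₂, h₁]
    _ ≤ ∫ ω, |μ[fun ω => Z ω - c|m₂] ω| ∂μ := integral_abs_condExp_le _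
    _ = ∫ ω, |μ[Z|m₂] ω - c| ∂μ := by
        refine integral_congr_ae ?_
        filter_upwards [condExp_sub_const_ae hZ hm₂ c] with ω h
        rw [h]

end CondExp

theorem l1_target_shapley_effect_nonneg_general {Ω : Type*} {𝔉 : MeasurableSpace Ω} {μ : Measure Ω}
    [IsProbabilityMeasure μ] {d : ℕ} (X : Fin d → Ω → ℝ) (hX : ∀ i, Measurable (X i))
    (Z : Ω → ℝ) (hZ : Integrable Z μ) (j : Fin d) :
    0 ≤ (1 / (d : ℝ)) *
      ∑ A ∈ (Finset.univ.erase j).powerset,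
        (((d - 1).choose A.card : ℝ))⁻¹ *
          (((∫ ω, |(μ[Z| ⨆ i ∈ insert j A, MeasurableSpace.comap (X i) inferInstance]) ω
                - ∫ x, Z x ∂μ| ∂μ) / ∫ ω, |Z ω - ∫ x, Z x ∂μ| ∂μ)
            - ((∫ ω, |(μ[Z| ⨆ i ∈ A, MeasurableSpace.comap (X i) inferInstance]) ω
                - ∫ x, Z x ∂μ| ∂μ) / ∫ ω, |Z ω - ∫ x, Z x ∂μ| ∂μ)) := by
  refine mul_nonneg (by positivity) (sum_nonneg fun A _ => mul_nonneg (by positivity) ?_)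
  have hσ_le : (⨆ i ∈ insert j A, MeasurableSpace.comap (X i) inferInstance) ≤ 𝔉 :=
    iSup₂_le fun i _ => (hX i).comap_le
  have hσ_mono : (⨆ i ∈ A, MeasurableSpace.comap (X i) inferInstance) ≤
      ⨆ i ∈ insert j A, MeasurableSpace.comap (X i) inferInstance :=
    biSup_mono fun _ => mem_insert_of_mem
  exact sub_nonneg.mpr <| div_le_div_of_nonneg_right
    (integral_abs_condExp_sub_const_mono hZ hσ_mono hσ_le _) (integral_nonneg fun _ => abs_nonneg _)

/-- Nonnegativity of the (ℓ¹)-target Shapley effects: with cost function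
`val A = E[|E[Z | σ(X_A)] − E[Z]|] / E[|Z − E[Z]|]` (where `σ(X_∅) = ⊥` so that `val ∅ = 0`),
the Shapley value of every player `j` is nonnegative. No independence assumption on the inputs
is made. -/
theorem l1_target_shapley_effect_nonneg {Ω : Type*} {𝔉 : MeasurableSpace Ω} {μ : Measure Ω}
    [IsProbabilityMeasure μ] {d : ℕ} (X : Fin d → Ω → ℝ) (hX : ∀ i, Measurable (X i))
    (Z : Ω → ℝ) (hZ : Integrable Z μ)
    (hmad : 0 < ∫ ω, |Z ω - ∫ x, Z x ∂μ| ∂μ) (j : Fin d) :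
    0 ≤ (1 / (d : ℝ)) *
      ∑ A ∈ (Finset.univ.erase j).powerset,
        (((d - 1).choose A.card : ℝ))⁻¹ *
          (((∫ ω, |(μ[Z| ⨆ i ∈ insert j A, MeasurableSpace.comap (X i) inferInstance]) ω
                - ∫ x, Z x ∂μ| ∂μ) / ∫ ω, |Z ω - ∫ x, Z x ∂μ| ∂μ)
            - ((∫ ω, |(μ[Z| ⨆ i ∈ A, MeasurableSpace.comap (X i) inferInstance]) ω
                - ∫ x, Z x ∂μ| ∂μ) / ∫ ω, |Z ω - ∫ x, Z x ∂μ| ∂μ)) :=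
  l1_target_shapley_effect_nonneg_general (𝔉 := 𝔉) X hX Z hZ j
end

section
/- Let (Ω,𝔉,ℙ) be a probability space, X₁,…,X_d mutually independent real-valued random variables, and G a measurable function with E[G(X)²] < ∞ where X = (X₁,…,X_d). For A ⊆ {1,…,d}, define the Hoeffding component G_A = Σ_{B ⊆ A} (−1)^{|A|−|B|} E[G(X) | X_B], where E[G(X)|X_B] denotes conditional expectation given the σ-algebra generated by (X_i)_{i∈B} (with E[G(X)|X_∅] = E[G(X)]). Then for any two distinct subsets A ≠ B of {1,…,d}, the components are orthogonal in L²: E[G_A · G_B] = 0. -/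
/-! Write `E_C = E[G(X) | X_C]`. Independence makes these conditional expectations commute,
`E[E_C | X_D] = E_{C ∩ D}`, so the Gram entry `E[E_C E_D] = E[E_{C ∩ D}²]` depends on `C ∩ D`
only. Expanding `E[G_A G_B]` gives a double alternating sum of a function of `C ∩ D`; if, say,
`j ∈ A \ B`, the terms for `C` and `insert j C` cancel. -/

open MeasureTheory ProbabilityTheory Finset

section Combinatorics

variable {α R : Type*} [DecidableEq α] [CommRing R]

theorem Finset.sum_powerset_neg_one_pow_mul_eq_zero {A : Finset α} {j : α} (hj : j ∈ A)
    (w : Finset α → R) (hw : ∀ C, w (insert j C) = w C) :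
    ∑ C ∈ A.powerset, (-1 : R) ^ (#A - #C) * w C = 0 := by
  obtain ⟨A', hjA', rfl⟩ : ∃ A', j ∉ A' ∧ insert j A' = A :=
    ⟨A.erase j, A.notMem_erase j, insert_erase hj⟩
  rw [sum_powerset_insert hjA', ← sum_add_distrib]
  refine sum_eq_zero fun C hC => ?_
  have hCA : C ⊆ A' := mem_powerset.mp hC
  have hjC : j ∉ C := fun h => hjA' (hCA h)
  rw [card_insert_of_notMem hjA', card_insert_of_notMem hjC, hw C,
    Nat.succ_sub_succ, Nat.succ_sub (card_le_card hCA), pow_succ]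
  ring

theorem Finset.sum_powerset_mul_sum_powerset_inter_eq_zero_of_mem_of_notMem
    {A B : Finset α} {j : α} (hjA : j ∈ A) (hjB : j ∉ B) (S : Finset α → R) :
    ∑ C ∈ A.powerset, ∑ D ∈ B.powerset,
      (-1 : R) ^ (#A - #C) * (-1 : R) ^ (#B - #D) * S (C ∩ D) = 0 := by
  rw [sum_comm]
  refine sum_eq_zero fun D hD => ?_
  have hjD : j ∉ D := fun h => hjB (mem_powerset.mp hD h)
  calc ∑ C ∈ A.powerset, (-1 : R) ^ (#A - #C) * (-1 : R) ^ (#B - #D) * S (C ∩ D)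
      = (-1 : R) ^ (#B - #D) * ∑ C ∈ A.powerset, (-1 : R) ^ (#A - #C) * S (C ∩ D) := by
        rw [mul_sum]; exact sum_congr rfl fun C _ => by ring
    _ = 0 := by
        rw [sum_powerset_neg_one_pow_mul_eq_zero hjA (fun C => S (C ∩ D))
          (fun C => by rw [insert_inter_of_notMem hjD]), mul_zero]

theorem Finset.sum_powerset_mul_sum_powerset_inter_eq_zero {A B : Finset α} (hAB : A ≠ B)
    (S : Finset α → R) :
    ∑ C ∈ A.powerset, ∑ D ∈ B.powerset,
      (-1 : R) ^ (#A - #C) * (-1 : R) ^ (#B - #D) * S (C ∩ D) = 0 := by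
  by_cases hA : A ⊆ B
  · obtain ⟨j, hjB, hjA⟩ := not_subset.mp fun hB => hAB (Subset.antisymm hA hB)
    rw [sum_comm, ← sum_powerset_mul_sum_powerset_inter_eq_zero_of_mem_of_notMem hjB hjA S]
    exact sum_congr rfl fun D _ => sum_congr rfl fun C _ => by rw [inter_comm]; ring
  · obtain ⟨j, hjA, hjB⟩ := not_subset.mp hA
    exact sum_powerset_mul_sum_powerset_inter_eq_zero_of_mem_of_notMem hjA hjB S

end Combinatorics

namespace MeasurableSpace

theorem sup_eq_generateFrom_image2_inter {Ω : Type*} (m₁ m₂ : MeasurableSpace Ω) :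
    m₁ ⊔ m₂ = generateFrom
      (Set.image2 (· ∩ ·) {s | MeasurableSet[m₁] s} {t | MeasurableSet[m₂] t}) := by
  refine le_antisymm (sup_le ?_ ?_) (generateFrom_le ?_)
  · exact fun s hs => measurableSet_generateFrom
      ⟨s, hs, Set.univ, MeasurableSet.univ, Set.inter_univ s⟩
  · exact fun t ht => measurableSet_generateFrom
      ⟨Set.univ, MeasurableSet.univ, t, ht, Set.univ_inter t⟩
  · rintro _ ⟨s, hs, t, ht, rfl⟩
    exact (le_sup_left (b := m₂) s hs).inter (le_sup_right (a := m₁) t ht)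

end MeasurableSpace

theorem isPiSystem_image2_inter {Ω : Type*} (m₁ m₂ : MeasurableSpace Ω) :
    IsPiSystem (Set.image2 (· ∩ ·) {s | MeasurableSet[m₁] s} {t | MeasurableSet[m₂] t}) := by
  rintro _ ⟨s, hs, t, ht, rfl⟩ _ ⟨s', hs', t', ht', rfl⟩ _
  exact ⟨s ∩ s', hs.inter hs', t ∩ t', ht.inter ht', Set.inter_inter_inter_comm s s' t t'⟩

namespace MeasureTheory

variable {Ω E : Type*} [NormedAddCommGroup E] [NormedSpace ℝ E]

theorem setIntegral_eq_of_isPiSystem {m m₀ : MeasurableSpace Ω} {μ : Measure Ω} (hm : m ≤ m₀)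
    {P : Set (Set Ω)} (hgen : m = MeasurableSpace.generateFrom P) (hP : IsPiSystem P)
    {f g : Ω → E} (hf : Integrable f μ) (hg : Integrable g μ) (huniv : ∫ x, f x ∂μ = ∫ x, g x ∂μ)
    (hPeq : ∀ s ∈ P, ∫ x in s, f x ∂μ = ∫ x in s, g x ∂μ) {s : Set Ω} (hs : MeasurableSet[m] s) :
    ∫ x in s, f x ∂μ = ∫ x in s, g x ∂μ := by
  induction s, hs using MeasurableSpace.induction_on_inter hgen hP with
  | empty => simp
  | basic t ht => exact hPeq t ht
  | compl t ht ih =>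
    have hf' := integral_add_compl (hm t ht) hf
    have hg' := integral_add_compl (hm t ht) hg
    rw [ih, huniv, ← hg'] at hf'
    exact add_left_cancel hf'
  | iUnion t hdisj ht ih =>
    rw [integral_iUnion (fun n => hm _ (ht n)) hdisj hf.integrableOn,
      integral_iUnion (fun n => hm _ (ht n)) hdisj hg.integrableOn]
    exact tsum_congr ih

theorem setIntegral_inter_eq_smul_of_indep [CompleteSpace E] {m₁ m₂ m₀ : MeasurableSpace Ω}
    {μ : Measure Ω} [IsFiniteMeasure μ] (hm₁ : m₁ ≤ m₀) (hm₂ : m₂ ≤ m₀) (hindep : Indep m₁ m₂ μ)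
    {f : Ω → E} (hf : StronglyMeasurable[m₁] f) (hfi : Integrable f μ) {s t : Set Ω}
    (hs : MeasurableSet[m₁] s) (ht : MeasurableSet[m₂] t) :
    ∫ x in s ∩ t, f x ∂μ = μ.real t • ∫ x in s, f x ∂μ := by
  calc ∫ x in s ∩ t, f x ∂μ = ∫ x in t, s.indicator f x ∂μ := by
        rw [setIntegral_indicator (hm₁ s hs), Set.inter_comm]
    _ = ∫ x in t, (μ[s.indicator f | m₂]) x ∂μ :=
        (setIntegral_condExp hm₂ (hfi.indicator (hm₁ s hs)) ht).symm
    _ = ∫ x in t, (∫ y, s.indicator f y ∂μ) ∂μ :=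
        setIntegral_congr_ae (hm₂ t ht) ((condExp_indep_eq hm₁ hm₂ (hf.indicator hs)
          hindep).mono fun x hx _ => hx)
    _ = μ.real t • ∫ x in s, f x ∂μ := by
        rw [setIntegral_const, integral_indicator (hm₁ s hs)]

theorem condExp_sup_ae_eq_of_indep [CompleteSpace E] {m₁ m₂ m₃ m₀ : MeasurableSpace Ω}
    {μ : Measure Ω} [IsFiniteMeasure μ] (hm₁ : m₁ ≤ m₀) (hm₃ : m₃ ≤ m₀) (hm₂₁ : m₂ ≤ m₁)
    (hindep : Indep m₁ m₃ μ) {f : Ω → E} (hf : StronglyMeasurable[m₁] f) (hfi : Integrable f μ) :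
    μ[f | m₂ ⊔ m₃] =ᵐ[μ] μ[f | m₂] := by
  have hm₂ : m₂ ≤ m₀ := hm₂₁.trans hm₁
  refine (ae_eq_condExp_of_forall_setIntegral_eq (sup_le hm₂ hm₃) hfi
    (fun _ _ _ => integrable_condExp.integrableOn) (fun s hs _ => ?_)
    ((stronglyMeasurable_condExp (m := m₂) (f := f) (μ := μ)).mono
      (le_sup_left : m₂ ≤ m₂ ⊔ m₃)).aestronglyMeasurable).symm
  refine setIntegral_eq_of_isPiSystem (sup_le hm₂ hm₃)
    (MeasurableSpace.sup_eq_generateFrom_image2_inter m₂ m₃) (isPiSystem_image2_inter m₂ m₃)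
    integrable_condExp hfi (integral_condExp hm₂) ?_ hs
  rintro _ ⟨s, hs, t, ht, rfl⟩
  rw [setIntegral_inter_eq_smul_of_indep hm₁ hm₃ hindep (stronglyMeasurable_condExp.mono hm₂₁)
      integrable_condExp (hm₂₁ s hs) ht,
    setIntegral_inter_eq_smul_of_indep hm₁ hm₃ hindep hf hfi (hm₂₁ s hs) ht,
    setIntegral_condExp hm₂ hfi hs]

theorem integral_mul_eq_integral_condExp_mul {m m₀ : MeasurableSpace Ω} {μ : Measure Ω}
    (hm : m ≤ m₀) [SigmaFinite (μ.trim hm)] {f g : Ω → ℝ} (hg : StronglyMeasurable[m] g)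
    (hfg : Integrable (f * g) μ) (hf : Integrable f μ) :
    ∫ x, f x * g x ∂μ = ∫ x, (μ[f | m]) x * g x ∂μ := by
  rw [← integral_condExp hm]
  exact integral_congr_ae (condExp_mul_of_stronglyMeasurable_right hg hfg hf)

section IndependentFamily

variable {ι : Type*} [DecidableEq ι] {m : ι → MeasurableSpace Ω} {m₀ : MeasurableSpace Ω}
  {μ : Measure Ω} [IsFiniteMeasure μ]

theorem condExp_condExp_iSup_ae_eq_inter [CompleteSpace E] (hle : ∀ i, m i ≤ m₀)
    (hindep : iIndep m μ) (f : Ω → E) (C D : Finset ι) :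
    μ[μ[f | ⨆ i ∈ C, m i] | ⨆ i ∈ D, m i] =ᵐ[μ] μ[f | ⨆ i ∈ C ∩ D, m i] := by
  have hle' : ∀ C : Finset ι, ⨆ i ∈ C, m i ≤ m₀ := fun C => iSup₂_le fun i _ => hle i
  have hsplit : ⨆ i ∈ D, m i = (⨆ i ∈ C ∩ D, m i) ⊔ ⨆ i ∈ D \ C, m i := by
    have hD : C ∩ D ∪ D \ C = D := by
      ext i
      simp only [mem_union, mem_inter, mem_sdiff]
      tauto
    rw [← Finset.iSup_union, hD]
  have hinter_le : ⨆ i ∈ C ∩ D, m i ≤ ⨆ i ∈ C, m i :=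
    biSup_mono fun i hi => mem_of_mem_inter_left hi
  rw [hsplit]
  exact (condExp_sup_ae_eq_of_indep (hle' C) (hle' _) hinter_le
    (indep_iSup_of_disjoint hle hindep (disjoint_coe.mpr disjoint_sdiff))
    stronglyMeasurable_condExp integrable_condExp).trans
    (condExp_condExp_of_le hinter_le (hle' C))

theorem integral_condExp_iSup_mul_condExp_iSup (hle : ∀ i, m i ≤ m₀) (hindep : iIndep m μ)
    {f : Ω → ℝ} (hf : MemLp f 2 μ) (C D : Finset ι) :
    ∫ x, (μ[f | ⨆ i ∈ C, m i]) x * (μ[f | ⨆ i ∈ D, m i]) x ∂μ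
      = ∫ x, (μ[f | ⨆ i ∈ C ∩ D, m i]) x * (μ[f | ⨆ i ∈ C ∩ D, m i]) x ∂μ := by
  set h : Finset ι → Ω → ℝ := fun C => μ[f | ⨆ i ∈ C, m i]
  have hle' : ∀ C : Finset ι, ⨆ i ∈ C, m i ≤ m₀ := fun C => iSup₂_le fun i _ => hle i
  have hL2 : ∀ C, MemLp (h C) 2 μ := fun C => hf.condExp one_le_two
  have hint : ∀ C D, Integrable (h C * h D) μ := fun C D => (hL2 C).integrable_mul (hL2 D)
  calc ∫ x, h C x * h D x ∂μ = ∫ x, (μ[h C | ⨆ i ∈ D, m i]) x * h D x ∂μ :=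
        integral_mul_eq_integral_condExp_mul (hle' D) stronglyMeasurable_condExp (hint C D)
          integrable_condExp
    _ = ∫ x, h D x * h (C ∩ D) x ∂μ := integral_congr_ae <|
        (condExp_condExp_iSup_ae_eq_inter hle hindep f C D).mono fun x hx =>
          (mul_comm _ _).trans (congrArg (h D x * ·) hx)
    _ = ∫ x, (μ[h D | ⨆ i ∈ C ∩ D, m i]) x * h (C ∩ D) x ∂μ :=
        integral_mul_eq_integral_condExp_mul (hle' _) stronglyMeasurable_condExp (hint D _)
          integrable_condExp
    _ = ∫ x, h (C ∩ D) x * h (C ∩ D) x ∂μ := integral_congr_ae <|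
        (condExp_condExp_of_le (f := f) (biSup_mono fun i (hi : i ∈ C ∩ D) =>
          mem_of_mem_inter_right hi) (hle' D)).mono fun x hx => congrArg (· * h (C ∩ D) x) hx

end IndependentFamily

theorem integral_sum_powerset_mul_sum_powerset_eq_zero {ι : Type*}
    [DecidableEq ι] {m₀ : MeasurableSpace Ω} {μ : Measure Ω} (h : Finset ι → Ω → ℝ)
    (hL2 : ∀ C, MemLp (h C) 2 μ)
    (hinter : ∀ C D, ∫ ω, h C ω * h D ω ∂μ = ∫ ω, h (C ∩ D) ω * h (C ∩ D) ω ∂μ)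
    {A B : Finset ι} (hAB : A ≠ B) :
    ∫ ω, (∑ C ∈ A.powerset, (-1 : ℝ) ^ (#A - #C) * h C ω)
      * (∑ D ∈ B.powerset, (-1 : ℝ) ^ (#B - #D) * h D ω) ∂μ = 0 := by
  have hint : ∀ C D, Integrable (fun ω => h C ω * h D ω) μ := fun C D =>
    (hL2 C).integrable_mul (hL2 D)
  have hexpand : ∀ ω, (∑ C ∈ A.powerset, (-1 : ℝ) ^ (#A - #C) * h C ω)
      * (∑ D ∈ B.powerset, (-1 : ℝ) ^ (#B - #D) * h D ω)
      = ∑ C ∈ A.powerset, ∑ D ∈ B.powerset,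
          (-1 : ℝ) ^ (#A - #C) * (-1 : ℝ) ^ (#B - #D) * (h C ω * h D ω) := fun ω => by
    rw [sum_mul_sum]
    exact sum_congr rfl fun _ _ => sum_congr rfl fun _ _ => by ring
  calc _ = ∑ C ∈ A.powerset, ∑ D ∈ B.powerset,
          (-1 : ℝ) ^ (#A - #C) * (-1 : ℝ) ^ (#B - #D) * ∫ ω, h C ω * h D ω ∂μ := by
        simp_rw [hexpand]
        rw [integral_finsetSum _ fun C _ =>
          integrable_finsetSum _ fun D _ => (hint C D).const_mul _]
        refine sum_congr rfl fun C _ => ?_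
        rw [integral_finsetSum _ fun D _ => (hint C D).const_mul _]
        exact sum_congr rfl fun D _ => integral_const_mul _ _
    _ = 0 := by
        rw [← sum_powerset_mul_sum_powerset_inter_eq_zero hAB
          fun E => ∫ ω, h E ω * h E ω ∂μ]
        exact sum_congr rfl fun C _ => sum_congr rfl fun D _ => by rw [hinter]

end MeasureTheory

theorem hoeffding_components_orthogonal_general {Ω : Type*} {𝔉 : MeasurableSpace Ω} {μ : Measure Ω}
    [IsProbabilityMeasure μ] {d : ℕ} (X : Fin d → Ω → ℝ) (hX : ∀ i, Measurable (X i))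
    (hindep : iIndepFun X μ)
    (G : (Fin d → ℝ) → ℝ)
    (hG : MemLp (fun ω => G (fun i => X i ω)) 2 μ)
    (A B : Finset (Fin d)) (hAB : A ≠ B) :
    ∫ ω,
        (∑ C ∈ A.powerset, (-1 : ℝ) ^ (A.card - C.card) *
          (μ[(fun ω' => G (fun i => X i ω'))|
              ⨆ i ∈ C, MeasurableSpace.comap (X i) inferInstance]) ω)
      * (∑ C ∈ B.powerset, (-1 : ℝ) ^ (B.card - C.card) *
          (μ[(fun ω' => G (fun i => X i ω'))|
              ⨆ i ∈ C, MeasurableSpace.comap (X i) inferInstance]) ω) ∂μ = 0 := by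
  have hindep' : iIndep (fun i => MeasurableSpace.comap (X i) inferInstance) μ :=
    (iIndepFun_iff_iIndep _ X μ).1 hindep
  exact integral_sum_powerset_mul_sum_powerset_eq_zero _ (fun _ => hG.condExp one_le_two)
    (integral_condExp_iSup_mul_condExp_iSup (fun i => (hX i).comap_le) hindep' hG) hAB

/-- Orthogonality of the Hoeffding components under mutually independent inputs: for distinct
subsets `A ≠ B` of `{1,…,d}`, the components
`G_A = Σ_{C ⊆ A} (−1)^{|A|−|C|} E[G(X) | σ(X_C)]` satisfy `E[G_A · G_B] = 0`. -/
theorem hoeffding_components_orthogonal {Ω : Type*} {𝔉 : MeasurableSpace Ω} {μ : Measure Ω}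
    [IsProbabilityMeasure μ] {d : ℕ} (X : Fin d → Ω → ℝ) (hX : ∀ i, Measurable (X i))
    (hindep : iIndepFun X μ)
    (G : (Fin d → ℝ) → ℝ) (hGm : Measurable G)
    (hG : MemLp (fun ω => G (fun i => X i ω)) 2 μ)
    (A B : Finset (Fin d)) (hAB : A ≠ B) :
    ∫ ω,
        (∑ C ∈ A.powerset, (-1 : ℝ) ^ (A.card - C.card) *
          (μ[(fun ω' => G (fun i => X i ω'))|
              ⨆ i ∈ C, MeasurableSpace.comap (X i) inferInstance]) ω)
      * (∑ C ∈ B.powerset, (-1 : ℝ) ^ (B.card - C.card) *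
          (μ[(fun ω' => G (fun i => X i ω'))|
              ⨆ i ∈ C, MeasurableSpace.comap (X i) inferInstance]) ω) ∂μ = 0 :=
  hoeffding_components_orthogonal_general (𝔉 := 𝔉) X hX hindep G hG A B hAB
end
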